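/- Let n ≥ 1, let x, a ∈ ℝⁿ with x ≠ a, let 0 < s < √2 − 1, and let z ∈ ℂⁿ satisfy ‖z − x‖ ≤ s·|x − a|, where ‖·‖ is the Euclidean (Hermitian) norm on ℂⁿ and |·| the Euclidean norm on ℝⁿ. Then the complex number ∑_{j=1}^n (z_j − a_j)² satisfies |∑_{j=1}^n (z_j − a_j)²| ≥ (1 − s(2+s))·|x − a|², and 1 − s(2+s) > 0. -/

import Mathlib

/-!
Write `z - a = u + d` with `u = z - x` complex and `d = x - a` real. Then
`∑ (zⱼ - aⱼ)² = |d|² + 2 ∑ uⱼ dⱼ + ∑ uⱼ²`, and since `d` is real the first term is the positive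
number `|d|²`. The Cauchy–Schwarz inequality for the bilinear (not Hermitian) form `∑ uⱼ wⱼ`
bounds the other two terms by `2 ‖u‖ |d| + ‖u‖² ≤ (2s + s²) |d|²`.
-/

open Finset

/-- The coordinatewise embedding of `ℝⁿ` into `ℂⁿ`. -/
def complexify {n : ℕ} (x : EuclideanSpace ℝ (Fin n)) : EuclideanSpace ℂ (Fin n) :=
  WithLp.toLp 2 (fun j => (x j : ℂ))

namespace EuclideanSpace

variable {𝕜 ι : Type*} [RCLike 𝕜] [Fintype ι]

theorem norm_sum_mul_le (u w : EuclideanSpace 𝕜 ι) : ‖∑ j, u j * w j‖ ≤ ‖u‖ * ‖w‖ :=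
  calc ‖∑ j, u j * w j‖ ≤ ∑ j, ‖u j‖ * ‖w j‖ := norm_sum_le_of_le _ fun j _ => norm_mul_le _ _
    _ ≤ √(∑ j, ‖u j‖ ^ 2) * √(∑ j, ‖w j‖ ^ 2) := Real.sum_mul_le_sqrt_mul_sqrt _ _ _
    _ = ‖u‖ * ‖w‖ := by rw [norm_eq, norm_eq]

theorem norm_sum_sq_le (u : EuclideanSpace 𝕜 ι) : ‖∑ j, u j ^ 2‖ ≤ ‖u‖ ^ 2 := by
  simpa only [sq] using norm_sum_mul_le u u

theorem norm_sum_sq_sub_le_norm_sum_add_sq (u w : EuclideanSpace 𝕜 ι) :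
    ‖∑ j, w j ^ 2‖ - 2 * (‖u‖ * ‖w‖) - ‖u‖ ^ 2 ≤ ‖∑ j, (u j + w j) ^ 2‖ := by
  have hexpand : ∑ j, (u j + w j) ^ 2 = ∑ j, w j ^ 2 + 2 * ∑ j, u j * w j + ∑ j, u j ^ 2 := by
    simp only [mul_sum, ← sum_add_distrib]
    exact sum_congr rfl fun j _ => by ring
  have hcross : ‖2 * ∑ j, u j * w j‖ ≤ 2 * (‖u‖ * ‖w‖) := by
    rw [norm_mul, RCLike.norm_ofNat]
    gcongr
    exact norm_sum_mul_le u w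
  have htriangle : ‖∑ j, w j ^ 2‖ ≤
      ‖∑ j, (u j + w j) ^ 2‖ + ‖2 * ∑ j, u j * w j‖ + ‖∑ j, u j ^ 2‖ :=
    calc ‖∑ j, w j ^ 2‖
        = ‖∑ j, (u j + w j) ^ 2 + -(2 * ∑ j, u j * w j) + -∑ j, u j ^ 2‖ := by
          rw [hexpand]; ring_nf
      _ ≤ _ := norm_add₃_le.trans_eq (by rw [norm_neg, norm_neg])
  linarith [norm_sum_sq_le u]

end EuclideanSpace

theorem complexify_apply {n : ℕ} (x : EuclideanSpace ℝ (Fin n)) (j : Fin n) :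
    complexify x j = x j :=
  rfl

theorem norm_complexify {n : ℕ} (x : EuclideanSpace ℝ (Fin n)) : ‖complexify x‖ = ‖x‖ := by
  simp only [EuclideanSpace.norm_eq, complexify_apply, Complex.norm_real]

theorem sum_sq_complexify {n : ℕ} (x : EuclideanSpace ℝ (Fin n)) :
    ∑ j, complexify x j ^ 2 = ((‖x‖ ^ 2 : ℝ) : ℂ) := by
  simp only [EuclideanSpace.norm_sq_eq, complexify_apply, Real.norm_eq_abs, sq_abs]
  push_cast
  rfl

theorem sum_sq_lower_bound_general {n : ℕ}
    (x a : EuclideanSpace ℝ (Fin n))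
    (s : ℝ) (hs0 : 0 < s) (hs1 : s < Real.sqrt 2 - 1)
    (z : EuclideanSpace ℂ (Fin n))
    (hz : ‖z - complexify x‖ ≤ s * ‖x - a‖) :
    (1 - s * (2 + s)) * ‖x - a‖ ^ 2 ≤ ‖∑ j, (z j - (a j : ℂ)) ^ 2‖ ∧
      0 < 1 - s * (2 + s) := by
  have hsqrt2 : Real.sqrt 2 ^ 2 = 2 := Real.sq_sqrt zero_le_two
  refine ⟨?_, by nlinarith [Real.sqrt_nonneg 2]⟩
  have hsplit : ∀ j, z j - (a j : ℂ) = (z - complexify x) j + complexify (x - a) j := fun j => by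
    simp only [PiLp.sub_apply, complexify_apply, Complex.ofReal_sub]
    ring
  have hbound := EuclideanSpace.norm_sum_sq_sub_le_norm_sum_add_sq (z - complexify x)
    (complexify (x - a))
  rw [sum_sq_complexify, norm_complexify, Complex.norm_real, Real.norm_of_nonneg (sq_nonneg _)]
    at hbound
  simp only [← hsplit] at hbound
  nlinarith [norm_nonneg (z - complexify x), norm_nonneg (x - a)]

/-- Let `x, a ∈ ℝⁿ` with `x ≠ a`, let `0 < s < √2 − 1`, and let `z ∈ ℂⁿ` satisfy
`‖z − x‖ ≤ s·|x − a|` (with `ℝⁿ ⊆ ℂⁿ` coordinatewise). Then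
`|∑ⱼ (zⱼ − aⱼ)²| ≥ (1 − s(2+s))·|x − a|²` and `1 − s(2+s) > 0`. -/
theorem sum_sq_lower_bound {n : ℕ} (hn : 1 ≤ n)
    (x a : EuclideanSpace ℝ (Fin n)) (hxa : x ≠ a)
    (s : ℝ) (hs0 : 0 < s) (hs1 : s < Real.sqrt 2 - 1)
    (z : EuclideanSpace ℂ (Fin n))
    (hz : ‖z - complexify x‖ ≤ s * ‖x - a‖) :
    (1 - s * (2 + s)) * ‖x - a‖ ^ 2 ≤ ‖∑ j, (z j - (a j : ℂ)) ^ 2‖ ∧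
      0 < 1 - s * (2 + s) :=
  sum_sq_lower_bound_general x a s hs0 hs1 z hz
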